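/- Consider the equal-mass case ε = 1, where rosette central configurations are the solutions x > 0 of F(x, 1, μ) = 0. If n = 2 then for every μ > 0 there is exactly one solution. If n ≥ 3, let μ_c(n) = (1/12)·Σ_{k=1}^{n} cos φ_k / sin³(φ_k/2) − n·k_n; then for every μ with 0 < μ < μ_c(n) there are exactly three solutions, and for every μ ≥ μ_c(n) there is exactly one solution. -/

import Mathlib

/-- `k_n = (1/(4n)) · Σ_{k=1}^{n-1} 1/sin(kπ/n)` -/
noncomputable def kn (n : ℕ) : ℝ :=
  (1 / (4 * n)) * ∑ k ∈ Finset.Icc 1 (n - 1), 1 / Real.sin (k * Real.pi / n)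

/-- `φ_k = (2k-1)π/n` -/
noncomputable def phi (n k : ℕ) : ℝ := (2 * (k : ℝ) - 1) * Real.pi / n

/-- The central configuration equation function `F(x, ε, μ)`. -/
noncomputable def F (n : ℕ) (x ε μ : ℝ) : ℝ :=
  μ / n * (1 - x ^ 3) + kn n * (ε - x ^ 3) +
    x ^ 3 / n * ∑ k ∈ Finset.Icc 1 n,
      ((1 - ε) - (1 / x) * (1 - ε * x ^ 2) * Real.cos (phi n k)) /
        (1 + x ^ 2 - 2 * x * Real.cos (phi n k)) ^ ((3 : ℝ) / 2)

/-- `μ_c(n) = (1/12)·Σ_{k=1}^{n} cos φ_k / sin³(φ_k/2) − n·k_n` -/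
noncomputable def muC (n : ℕ) : ℝ :=
  (1 / 12) * ∑ k ∈ Finset.Icc 1 n, Real.cos (phi n k) / Real.sin (phi n k / 2) ^ 3 -
    (n : ℝ) * kn n

/-!
With equal masses, `F(x, 1, μ) = (x - 1)(x² + x + 1)/n · (μ(x) - μ)` where
`μ(x) = q(x) Σ_k cos φ_k / |1 - x e^{iφ_k}|³ - n k_n`, so the solutions are `x = 1` together with
the level set `μ(x) = μ`. The function `μ(x)` is invariant under `x ↦ 1/x`, equals `-n k_n < 0`
at `0` and `μ_c(n)` at `1`. For `n = 2` the two cosines vanish and `μ(x) ≡ -2 k_2`. For `n ≥ 3`,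
`μ` is strictly increasing on `[0, 1]`: its derivative has the form `Σ_k c_k ψ(c_k)` with
`c_k = cos φ_k`, `Σ_k c_k = 0` and `ψ` increasing, so it equals `Σ_k c_k (ψ(c_k) - ψ(0)) > 0`.
Hence a value `μ ∈ (0, μ_c)` is taken exactly at some `a ∈ (0, 1)` and at `1/a`, while values
`μ ≥ μ_c` are not taken away from `x = 1`.
-/

open Real Finset

lemma sum_mul_pos_of_sum_eq_zero {ι : Type*} {s : Finset ι} {c : ι → ℝ} {g : ℝ → ℝ}
    {I : Set ℝ} (hg : StrictMonoOn g I) (h0 : 0 ∈ I) (hcI : ∀ i ∈ s, c i ∈ I)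
    (hc : ∑ i ∈ s, c i = 0) {j : ι} (hj : j ∈ s) (hcj : c j ≠ 0) :
    0 < ∑ i ∈ s, c i * g (c i) := by
  have hpos : ∀ t ∈ I, t ≠ 0 → 0 < t * (g t - g 0) := fun t ht ht0 => by
    rcases ht0.lt_or_gt with hneg | hpos
    · exact mul_pos_of_neg_of_neg hneg (sub_neg.mpr (hg ht h0 hneg))
    · exact mul_pos hpos (sub_pos.mpr (hg h0 ht hpos))
  have hshift : ∑ i ∈ s, c i * g (c i) = ∑ i ∈ s, c i * (g (c i) - g 0) := by
    simp only [mul_sub, sum_sub_distrib, ← sum_mul, hc, zero_mul, sub_zero]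
  rw [hshift]
  refine sum_pos' (fun i hi => ?_) ⟨j, hj, hpos _ (hcI j hj) hcj⟩
  by_cases hci : c i = 0
  · simp [hci]
  · exact (hpos _ (hcI i hi) hci).le

section InversionInvariant

variable {f : ℝ → ℝ}

lemma apply_le_apply_one (hf : MonotoneOn f (Set.Ioc 0 1)) (hinv : ∀ x, 0 < x → f x⁻¹ = f x)
    {x : ℝ} (hx : 0 < x) : f x ≤ f 1 := by
  have h1 : (1 : ℝ) ∈ Set.Ioc 0 1 := ⟨one_pos, le_rfl⟩
  rcases le_or_gt x 1 with hx1 | hx1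
  · exact hf ⟨hx, hx1⟩ h1 hx1
  · have hinv1 := ((inv_lt_one₀ hx).mpr hx1).le
    rw [← hinv x hx]
    exact hf ⟨inv_pos.mpr hx, hinv1⟩ h1 hinv1

lemma setOf_pos_apply_eq (hf : StrictMonoOn f (Set.Ioc 0 1)) (hinv : ∀ x, 0 < x → f x⁻¹ = f x)
    {a : ℝ} (ha : a ∈ Set.Ioc 0 1) : {x | 0 < x ∧ f x = f a} = {a, a⁻¹} := by
  ext x
  simp only [Set.mem_ofPred_eq, Set.mem_insert_iff, Set.mem_singleton_iff]
  constructor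
  · rintro ⟨hx, hfx⟩
    rcases le_or_gt x 1 with hx1 | hx1
    · exact Or.inl (hf.injOn ⟨hx, hx1⟩ ha hfx)
    · refine Or.inr (inv_eq_iff_eq_inv.mp (hf.injOn ?_ ha (by rw [hinv x hx, hfx])))
      exact ⟨inv_pos.mpr hx, ((inv_lt_one₀ hx).mpr hx1).le⟩
  · rintro (rfl | rfl)
    · exact ⟨ha.1, rfl⟩
    · exact ⟨inv_pos.mpr ha.1, hinv a ha.1⟩

end InversionInvariant

namespace Rosette

lemma phi_div_two_mem_Ioo {n k : ℕ} (hk : k ∈ Icc 1 n) : phi n k / 2 ∈ Set.Ioo 0 π := by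
  obtain ⟨hk1, hkn⟩ := mem_Icc.mp hk
  have hk1' : (1 : ℝ) ≤ k := by exact_mod_cast hk1
  have hkn' : (k : ℝ) ≤ n := by exact_mod_cast hkn
  have hn : (0 : ℝ) < n := by linarith
  unfold phi
  constructor
  · have : (0 : ℝ) < 2 * k - 1 := by linarith
    positivity
  · rw [div_div, div_lt_iff₀ (by positivity)]
    nlinarith [pi_pos]

lemma sin_phi_div_two_pos {n k : ℕ} (hk : k ∈ Icc 1 n) : 0 < sin (phi n k / 2) :=
  sin_pos_of_mem_Ioo (phi_div_two_mem_Ioo hk)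

lemma cos_phi_eq (n k : ℕ) : cos (phi n k) = 1 - 2 * sin (phi n k / 2) ^ 2 := by
  rw [← cos_two_mul_eq_one_sub, mul_div_cancel₀ _ two_ne_zero]

lemma cos_phi_lt_one {n k : ℕ} (hk : k ∈ Icc 1 n) : cos (phi n k) < 1 := by
  rw [cos_phi_eq]
  nlinarith [sin_phi_div_two_pos hk]

lemma sum_cos_phi {n : ℕ} (hn : 2 ≤ n) : ∑ k ∈ Icc 1 n, cos (phi n k) = 0 := by
  have hn' : (0 : ℝ) < n := by positivity
  have hsin : sin (π / n) ≠ 0 := by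
    refine (sin_pos_of_pos_of_lt_pi (by positivity) ?_).ne'
    rw [div_lt_iff₀ hn']
    have : (2 : ℝ) ≤ n := by exact_mod_cast hn
    nlinarith [pi_pos]
  have h := sin_mul_sum_cos n (2 * π / n) (π / n)
  rw [show (n : ℝ) * (2 * π / n) / 2 = π by field_simp, sin_pi, zero_mul,
    show 2 * π / n / 2 = π / n by ring] at h
  rw [show Icc 1 n = Ico 1 (n + 1) from rfl, sum_Ico_eq_sum_range, Nat.add_sub_cancel]
  convert (mul_eq_zero.mp h).resolve_left hsin using 3 with i
  unfold phi
  push_cast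
  ring

lemma kn_pos {n : ℕ} (hn : 2 ≤ n) : 0 < kn n := by
  have hn' : (0 : ℝ) < n := by positivity
  refine mul_pos (by positivity) (sum_pos (fun k hk => ?_) ⟨1, by simp; omega⟩)
  obtain ⟨hk1, hkn⟩ := mem_Icc.mp hk
  have hk1' : (1 : ℝ) ≤ k := by exact_mod_cast hk1
  have hkn' : (k : ℝ) < n := by exact_mod_cast (by omega : k < n)
  refine one_div_pos.mpr (sin_pos_of_pos_of_lt_pi (by positivity) ?_)
  rw [div_lt_iff₀ hn']
  nlinarith [pi_pos]

-- The squared distance `|1 - x e^{iφ}|²` with `c = cos φ`.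
noncomputable def sqDist (x c : ℝ) : ℝ := 1 + x ^ 2 - 2 * x * c

-- `q x = x² (1 - x²) / (1 - x³)`: in `F(x, 1, μ)` the cosine sum carries the factor
-- `x² (1 - x²) / n`, and the common factor `(1 - x³) / n` is divided out.
noncomputable def q (x : ℝ) : ℝ := x ^ 2 * (x + 1) / (x ^ 2 + x + 1)

noncomputable def q' (x : ℝ) : ℝ := x * (x ^ 3 + 2 * x ^ 2 + 4 * x + 2) / (x ^ 2 + x + 1) ^ 2

noncomputable def S (n : ℕ) (x : ℝ) : ℝ :=
  ∑ k ∈ Icc 1 n, cos (phi n k) * sqDist x (cos (phi n k)) ^ (-(3 / 2) : ℝ)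

noncomputable def mu (n : ℕ) (x : ℝ) : ℝ := q x * S n x - n * kn n

noncomputable def psi (x c : ℝ) : ℝ :=
  q' x * sqDist x c ^ (-(3 / 2) : ℝ) - 3 * q x * ((x - c) * sqDist x c ^ (-(5 / 2) : ℝ))

lemma sqDist_pos_of_lt_one_right {x c : ℝ} (hx : 0 ≤ x) (hc : c < 1) : 0 < sqDist x c := by
  unfold sqDist
  rcases le_or_gt c 0 with hc0 | hc0
  · nlinarith [mul_nonneg hx (neg_nonneg.mpr hc0)]
  · nlinarith [sq_nonneg (x - c)]

lemma sqDist_pos_of_lt_one_left {x c : ℝ} (hx : 0 ≤ x) (hx1 : x < 1) (hc : c ≤ 1) :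
    0 < sqDist x c := by
  unfold sqDist
  nlinarith [mul_nonneg hx (sub_nonneg.mpr hc)]

lemma sqDist_inv {x : ℝ} (hx : x ≠ 0) (c : ℝ) : sqDist x⁻¹ c = sqDist x c / x ^ 2 := by
  unfold sqDist
  field_simp
  ring

lemma sq_add_add_one_pos (x : ℝ) : 0 < x ^ 2 + x + 1 := by nlinarith [sq_nonneg (x + 1 / 2)]

lemma q_pos {x : ℝ} (hx : 0 < x) : 0 < q x := by
  have := sq_add_add_one_pos x
  unfold q
  positivity

lemma q_inv {x : ℝ} (hx : x ≠ 0) : q x⁻¹ = q x / x ^ 3 := by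
  have := (sq_add_add_one_pos x).ne'
  unfold q
  field_simp
  ring

lemma F_one_eq {n : ℕ} (hn : n ≠ 0) {x : ℝ} (hx : 0 < x) (μ : ℝ) :
    F n x 1 μ = (x - 1) * (x ^ 2 + x + 1) / n * (mu n x - μ) := by
  have hterm : ∀ k ∈ Icc 1 n,
      ((1 - 1) - (1 / x) * (1 - 1 * x ^ 2) * cos (phi n k)) /
        (1 + x ^ 2 - 2 * x * cos (phi n k)) ^ ((3 : ℝ) / 2) =
      -((1 - x ^ 2) / x) * (cos (phi n k) * sqDist x (cos (phi n k)) ^ (-(3 / 2) : ℝ)) := by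
    intro k hk
    rw [rpow_neg (sqDist_pos_of_lt_one_right hx.le (cos_phi_lt_one hk)).le, sqDist]
    field_simp
    ring
  have := (sq_add_add_one_pos x).ne'
  rw [F, sum_congr rfl hterm, ← mul_sum, ← S, mu, q]
  field_simp
  ring

lemma F_one_eq_zero_iff {n : ℕ} (hn : n ≠ 0) {x : ℝ} (hx : 0 < x) {μ : ℝ} :
    F n x 1 μ = 0 ↔ x = 1 ∨ mu n x = μ := by
  rw [F_one_eq hn hx, mul_eq_zero, div_eq_zero_iff, mul_eq_zero, sub_eq_zero, sub_eq_zero]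
  simp [(sq_add_add_one_pos x).ne', hn]

lemma mu_zero (n : ℕ) : mu n 0 = -(n * kn n) := by simp [mu, q]

lemma mu_one (n : ℕ) : mu n 1 = muC n := by
  have hterm : ∀ k ∈ Icc 1 n, q 1 * (cos (phi n k) * sqDist 1 (cos (phi n k)) ^ (-(3 / 2) : ℝ)) =
      1 / 12 * (cos (phi n k) / sin (phi n k / 2) ^ 3) := by
    intro k hk
    have hs := sin_phi_div_two_pos hk
    have hD : sqDist 1 (cos (phi n k)) = (2 * sin (phi n k / 2)) ^ (2 : ℝ) := by
      rw [sqDist, cos_phi_eq, rpow_two]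
      ring
    rw [hD, ← rpow_mul (by positivity), show (2 : ℝ) * -(3 / 2) = -(3 : ℕ) by norm_num,
      rpow_neg (by positivity), rpow_natCast, q]
    field_simp
    ring
  rw [mu, muC, S, mul_sum, sum_congr rfl hterm, mul_sum]

lemma mu_inv (n : ℕ) {x : ℝ} (hx : 0 < x) : mu n x⁻¹ = mu n x := by
  have hterm : ∀ k ∈ Icc 1 n,
      q x⁻¹ * (cos (phi n k) * sqDist x⁻¹ (cos (phi n k)) ^ (-(3 / 2) : ℝ)) =
      q x * (cos (phi n k) * sqDist x (cos (phi n k)) ^ (-(3 / 2) : ℝ)) := by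
    intro k hk
    have hD := sqDist_pos_of_lt_one_right hx.le (cos_phi_lt_one hk)
    have hx3 : (x ^ 2) ^ (-(3 / 2) : ℝ) = (x ^ 3)⁻¹ := by
      rw [← rpow_natCast, ← rpow_mul hx.le, show ((2 : ℕ) : ℝ) * -(3 / 2) = -(3 : ℕ) by norm_num,
        rpow_neg hx.le, rpow_natCast]
    rw [q_inv hx.ne', sqDist_inv hx.ne', div_rpow hD.le (by positivity), hx3]
    field_simp
  rw [mu, mu, S, S, mul_sum, mul_sum, sum_congr rfl hterm]

lemma mu_two (x : ℝ) : mu 2 x = -(2 * kn 2) := by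
  have h1 : cos (phi 2 1) = 0 := by
    rw [show phi 2 1 = π / 2 by norm_num [phi], cos_pi_div_two]
  have h2 : cos (phi 2 2) = 0 := by
    rw [show phi 2 2 = π / 2 + π by norm_num [phi]; ring, cos_add_pi, cos_pi_div_two, neg_zero]
  simp [mu, S, show Icc 1 2 = {1, 2} from rfl, h1, h2]

lemma hasDerivAt_q (x : ℝ) : HasDerivAt q (q' x) x := by
  have hE := (sq_add_add_one_pos x).ne'
  have hnum : HasDerivAt (fun y : ℝ => y ^ 2 * (y + 1)) (2 * x * (x + 1) + x ^ 2) x := by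
    simpa using (hasDerivAt_pow 2 x).fun_mul ((hasDerivAt_id x).add_const 1)
  have hden : HasDerivAt (fun y : ℝ => y ^ 2 + y + 1) (2 * x + 1) x := by
    simpa using ((hasDerivAt_pow 2 x).add (hasDerivAt_id x)).add_const 1
  refine (hnum.div hden hE).congr_deriv ?_
  rw [q']
  field_simp
  ring

lemma hasDerivAt_mu (n : ℕ) {x : ℝ} (hx : 0 ≤ x) :
    HasDerivAt (mu n) (∑ k ∈ Icc 1 n, cos (phi n k) * psi x (cos (phi n k))) x := by
  have hS : HasDerivAt (S n) (∑ k ∈ Icc 1 n, cos (phi n k) *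
      ((2 * x - 2 * cos (phi n k)) * (-(3 / 2) : ℝ) *
        sqDist x (cos (phi n k)) ^ ((-(3 / 2) : ℝ) - 1))) x := by
    refine HasDerivAt.fun_sum fun k hk => HasDerivAt.const_mul _ ?_
    have hD := sqDist_pos_of_lt_one_right hx (cos_phi_lt_one hk)
    refine HasDerivAt.rpow_const ?_ (Or.inl hD.ne')
    simpa [sqDist] using ((hasDerivAt_pow 2 x).const_add 1).fun_sub
      (((hasDerivAt_id x).const_mul 2).mul_const (cos (phi n k)))
  refine (((hasDerivAt_q x).fun_mul hS).sub_const (n * kn n)).congr_deriv ?_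
  rw [S, mul_sum, mul_sum, ← sum_add_distrib]
  refine sum_congr rfl fun k _ => ?_
  rw [psi, show (-(3 / 2) : ℝ) - 1 = -(5 / 2) by norm_num]
  ring

lemma hasDerivAt_psi {x c : ℝ} (hx : 0 ≤ x) (hx1 : x < 1) (hc : c ≤ 1) :
    HasDerivAt (psi x) (3 * sqDist x c ^ (-(7 / 2) : ℝ) *
      ((x * q' x - 3 / 2 * q x) * sqDist x c + 5 / 2 * q x * (1 - x ^ 2))) c := by
  have hD := sqDist_pos_of_lt_one_left hx hx1 hc
  have hDc : HasDerivAt (sqDist x) (-(2 * x)) c :=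
    (((hasDerivAt_id' c).const_mul (2 * x)).const_sub (1 + x ^ 2)).congr_deriv (by ring)
  have h3 := hDc.rpow_const (p := -(3 / 2)) (Or.inl hD.ne')
  have h5 := hDc.rpow_const (p := -(5 / 2)) (Or.inl hD.ne')
  refine ((h3.const_mul (q' x)).sub
    ((((hasDerivAt_id' c).const_sub x).fun_mul h5).const_mul (3 * q x))).congr_deriv ?_
  rw [show (-(3 / 2) : ℝ) - 1 = 1 + -(7 / 2) by norm_num,
    show (-(5 / 2) : ℝ) - 1 = -(7 / 2) by norm_num, show (-(5 / 2) : ℝ) = 1 + -(7 / 2) by norm_num,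
    rpow_add hD, rpow_one, sqDist]
  ring

lemma psi_strictMonoOn {x : ℝ} (hx0 : 0 < x) (hx1 : x < 1) : StrictMonoOn (psi x) (Set.Iic 1) := by
  refine strictMonoOn_of_deriv_pos (convex_Iic 1)
    (fun c hc => (hasDerivAt_psi hx0.le hx1 hc).continuousAt.continuousWithinAt) fun c hc => ?_
  rw [interior_Iic] at hc
  rw [(hasDerivAt_psi hx0.le hx1 hc.le).deriv]
  have hD := sqDist_pos_of_lt_one_left hx0.le hx1 hc.le
  have hE := (sq_add_add_one_pos x).ne'
  have hA : 0 ≤ x * q' x - 3 / 2 * q x := by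
    have hid : x * q' x - 3 / 2 * q x =
        x ^ 2 * (1 - x) * (x ^ 2 + 3 * x + 1) / (2 * (x ^ 2 + x + 1) ^ 2) := by
      rw [q', q]
      field_simp
      ring
    rw [hid]
    have : 0 ≤ 1 - x := by linarith
    positivity
  have hB : 0 < 5 / 2 * q x * (1 - x ^ 2) := by
    have := q_pos hx0
    have : 0 < 1 - x ^ 2 := by nlinarith
    positivity
  have := rpow_pos_of_pos hD (-(7 / 2))
  have := mul_nonneg hA hD.le
  positivity

lemma sum_cos_mul_psi_pos {n : ℕ} (hn : 3 ≤ n) {x : ℝ} (hx0 : 0 < x) (hx1 : x < 1) :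
    0 < ∑ k ∈ Icc 1 n, cos (phi n k) * psi x (cos (phi n k)) := by
  have hcos1 : 0 < cos (phi n 1) := by
    have hn' : (2 : ℝ) < n := by exact_mod_cast hn
    have hpin : 0 < π / n := by positivity
    rw [show phi n 1 = π / n by norm_num [phi]]
    exact cos_pos_of_mem_Ioo ⟨by linarith [pi_pos], div_lt_div_of_pos_left pi_pos two_pos hn'⟩
  exact sum_mul_pos_of_sum_eq_zero (psi_strictMonoOn hx0 hx1) (Set.mem_Iic.mpr zero_le_one)
    (fun k _ => cos_le_one _) (sum_cos_phi (by omega)) (by simp; omega) hcos1.ne'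

lemma continuousOn_mu (n : ℕ) : ContinuousOn (mu n) (Set.Ici 0) :=
  fun _ hx => (hasDerivAt_mu n hx).continuousAt.continuousWithinAt

lemma mu_strictMonoOn {n : ℕ} (hn : 3 ≤ n) : StrictMonoOn (mu n) (Set.Icc 0 1) := by
  refine strictMonoOn_of_deriv_pos (convex_Icc 0 1)
    ((continuousOn_mu n).mono Set.Icc_subset_Ici_self) fun x hx => ?_
  rw [interior_Icc] at hx
  rw [(hasDerivAt_mu n hx.1.le).deriv]
  exact sum_cos_mul_psi_pos hn hx.1 hx.2

lemma setOf_F_one_eq_zero {n : ℕ} (hn : n ≠ 0) (μ : ℝ) :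
    {x | 0 < x ∧ F n x 1 μ = 0} = insert 1 {x | 0 < x ∧ mu n x = μ} := by
  ext x
  simp only [Set.mem_ofPred_eq, Set.mem_insert_iff]
  constructor
  · rintro ⟨hx, h⟩
    exact ((F_one_eq_zero_iff hn hx).mp h).imp id (⟨hx, ·⟩)
  · rintro (rfl | ⟨hx, h⟩)
    · exact ⟨one_pos, (F_one_eq_zero_iff hn one_pos).mpr (Or.inl rfl)⟩
    · exact ⟨hx, (F_one_eq_zero_iff hn hx).mpr (Or.inr h)⟩

end Rosette

open Rosette in
theorem sekiguchi (n : ℕ) :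
    (n = 2 → ∀ μ : ℝ, 0 < μ → {x : ℝ | 0 < x ∧ F n x 1 μ = 0}.encard = 1) ∧
    (3 ≤ n → ∀ μ : ℝ, 0 < μ →
      (μ < muC n → {x : ℝ | 0 < x ∧ F n x 1 μ = 0}.encard = 3) ∧
      (muC n ≤ μ → {x : ℝ | 0 < x ∧ F n x 1 μ = 0}.encard = 1)) := by
  refine ⟨?_, fun hn μ hμ => ?_⟩
  · rintro rfl μ hμ
    have hempty : {x | 0 < x ∧ mu 2 x = μ} = ∅ :=
      Set.eq_empty_of_forall_notMem fun x ⟨_, hx⟩ => by linarith [mu_two x, kn_pos le_rfl]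
    rw [setOf_F_one_eq_zero two_ne_zero, hempty, insert_empty_eq, Set.encard_singleton]
  have hmono : StrictMonoOn (mu n) (Set.Ioc 0 1) :=
    (mu_strictMonoOn hn).mono Set.Ioc_subset_Icc_self
  have hinv : ∀ x, 0 < x → mu n x⁻¹ = mu n x := fun _ => mu_inv n
  rw [setOf_F_one_eq_zero (by omega)]
  refine ⟨fun hμc => ?_, fun hμc => ?_⟩
  · have hμ0 : mu n 0 < μ := by
      linarith [mu_zero n, mul_pos (by positivity : (0 : ℝ) < n) (kn_pos (n := n) (by omega))]
    obtain ⟨a, ⟨ha0, ha1⟩, rfl⟩ := intermediate_value_Ioo zero_le_one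
      ((continuousOn_mu n).mono Set.Icc_subset_Ici_self) ⟨hμ0, by rwa [mu_one]⟩
    have hainv : 1 < a⁻¹ := (one_lt_inv₀ ha0).mpr ha1
    rw [setOf_pos_apply_eq hmono hinv ⟨ha0, ha1.le⟩, Set.encard_eq_three]
    exact ⟨1, a, a⁻¹, ha1.ne', hainv.ne, (ha1.trans hainv).ne, rfl⟩
  · have hsub : {x | 0 < x ∧ mu n x = μ} ⊆ {x | 0 < x ∧ mu n x = mu n 1} := fun x ⟨hx, hμx⟩ =>
      ⟨hx, le_antisymm (apply_le_apply_one hmono.monotoneOn hinv hx) (by rwa [hμx, mu_one])⟩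
    rw [setOf_pos_apply_eq hmono hinv ⟨one_pos, le_rfl⟩, inv_one, Set.pair_eq_singleton] at hsub
    rw [Set.insert_eq, Set.union_eq_left.mpr hsub, Set.encard_singleton]
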